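/- Let R be a commutative Noetherian local ring and let M and N be nonzero finitely generated R-modules. If Tor_1^R(M/𝓣(M), N) = 0 and M ⊗_R N is torsion-free, then M is torsion-free, i.e., 𝓣(M) = 0. -/

import Mathlib

/-!
Definitions following O. Celikbas and G. Piepmeyer, "Syzygies and tensor product of
modules": depth, Serre's conditions, Tor vanishing, Betti numbers, complexity,
constant rank, regular local rings, complete intersections, quasi-deformations and
complete intersection dimension.
-/

universe u

open CategoryTheory IsLocalRing

noncomputable section

/-- The depth of a module over a local ring: the supremum of the lengths of weakly
regular sequences on `M` consisting of elements of the maximal ideal.  With this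
definition the depth of the zero module is `∞`. -/
noncomputable def moduleDepth (R : Type u) [CommRing R] [IsLocalRing R]
    (M : Type u) [AddCommGroup M] [Module R M] : ℕ∞ :=
  sSup {n : ℕ∞ | ∃ rs : List R, (rs.length : ℕ∞) = n ∧
    (∀ r ∈ rs, r ∈ maximalIdeal R) ∧ RingTheory.Sequence.IsWeaklyRegular M rs}

/-- Serre's condition `(S_n)`: `depth_{R_p}(M_p) ≥ min (n, ht p)` for every prime `p`
in the support of `M`. -/
def serreCondition (R : Type u) [CommRing R] (M : Type u) [AddCommGroup M] [Module R M]
    (n : ℕ) : Prop :=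
  ∀ p : PrimeSpectrum R, p ∈ Module.support R M →
    min (n : ℕ∞) (Order.height p) ≤
      moduleDepth (Localization.AtPrime p.asIdeal) (LocalizedModule p.asIdeal.primeCompl M)

/-- Vanishing of `Tor_i^R(M, N)` for all `i > 0`. -/
def torVanishesPos (R : Type u) [CommRing R] (M N : Type u) [AddCommGroup M] [Module R M]
    [AddCommGroup N] [Module R N] : Prop :=
  ∀ i : ℕ, 0 < i →
    Limits.IsZero (((Tor (ModuleCat.{u} R) i).obj (ModuleCat.of R M)).obj (ModuleCat.of R N))

/-- The `n`-th Betti number `β_n^R(M) = dim_k Tor_n^R(M, k)` of a module over a local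
ring `(R, 𝔪, k)`.  (`Tor_n^R(M, k)` is naturally a `k`-vector space; we realize its
`k`-structure by base changing to `k`, which does not change it.) -/
noncomputable def bettiNumber (R : Type u) [CommRing R] [IsLocalRing R]
    (M : Type u) [AddCommGroup M] [Module R M] (n : ℕ) : ℕ :=
  Module.finrank (ResidueField R)
    (TensorProduct R (ResidueField R)
      (((Tor (ModuleCat.{u} R) n).obj (ModuleCat.of R M)).obj
        (ModuleCat.of R (ResidueField R))))

/-- The complexity `cx_R(M)`: the least `r` such that the Betti numbers of `M` are
eventually bounded by `β · n^(r-1)` for some real `β`; it is `∞` if no such `r` exists. -/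
noncomputable def complexity (R : Type u) [CommRing R] [IsLocalRing R]
    (M : Type u) [AddCommGroup M] [Module R M] : ℕ∞ :=
  sInf {c : ℕ∞ | ∃ r : ℕ, c = (r : ℕ∞) ∧ ∃ β : ℝ, ∀ᶠ n : ℕ in Filter.atTop,
    (bettiNumber R M n : ℝ) ≤ β * (n : ℝ) ^ ((r : ℝ) - 1)}

/-- `M` has constant rank: there is an `r` with `M_p ≅ R_p^r` for every associated
prime `p` of `R`. -/
def hasConstantRank (R : Type u) [CommRing R] (M : Type u) [AddCommGroup M] [Module R M] :
    Prop :=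
  ∃ r : ℕ, ∀ (p : Ideal R) (hp : p.IsPrime), p ∈ associatedPrimes R R →
    letI := hp
    Nonempty ((LocalizedModule p.primeCompl M) ≃ₗ[Localization.AtPrime p]
      (Fin r → Localization.AtPrime p))

/-- A local ring is regular if it is Noetherian and its embedding dimension
`dim_k 𝔪/𝔪²` equals its Krull dimension. -/
def IsRegularLocal (R : Type u) [CommRing R] [IsLocalRing R] : Prop :=
  IsNoetherianRing R ∧
    ((Module.finrank (ResidueField R) (CotangentSpace R) : ℕ∞) : WithBot ℕ∞) = ringKrullDim R

/-- A Cohen presentation of the `𝔪`-adic completion of a local ring `R` as a quotient of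
a regular local ring `Q` by an ideal generated by a `Q`-regular sequence. -/
structure CIPresentation (R : Type u) [CommRing R] [IsLocalRing R] : Type (u + 1) where
  Q : Type u
  [commRingQ : CommRing Q]
  [isLocalRingQ : IsLocalRing Q]
  regular : IsRegularLocal Q
  toCompletion : Q →+* AdicCompletion (maximalIdeal R) R
  surjective : Function.Surjective toCompletion
  seq : List Q
  isRegularSeq : RingTheory.Sequence.IsRegular Q seq
  ker_eq : RingHom.ker toCompletion = Ideal.span {x | x ∈ seq}

/-- A local ring is a complete intersection if the defining ideal of a Cohen
presentation of its completion is generated by a regular sequence. -/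
def IsCompleteIntersectionLocalRing (R : Type u) [CommRing R] [IsLocalRing R] : Prop :=
  Nonempty (CIPresentation R)

/-- A complete intersection of codimension `c`, the codimension being
`dim_k(𝔪/𝔪²) - dim R`. -/
def IsCompleteIntersectionOfCodim (R : Type u) [CommRing R] [IsLocalRing R] (c : ℕ) :
    Prop :=
  Nonempty (CIPresentation R) ∧
    ((Module.finrank (ResidueField R) (CotangentSpace R) : ℕ∞) : WithBot ℕ∞) =
      ringKrullDim R + (c : WithBot ℕ∞)

/-- A hypersurface is a complete intersection of codimension one. -/
def IsHypersurfaceRing (R : Type u) [CommRing R] [IsLocalRing R] : Prop :=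
  IsCompleteIntersectionOfCodim R 1

/-- A quasi-deformation `R → R' ↞ Q`: a flat local map `R → R'` and a surjective local
map `Q ↠ R'` whose kernel is generated by a `Q`-regular sequence. -/
structure QuasiDeformation (R : Type u) [CommRing R] [IsLocalRing R] : Type (u + 1) where
  R' : Type u
  [commRingR' : CommRing R']
  [isLocalRingR' : IsLocalRing R']
  [algebraR' : Algebra R R']
  flat : Module.Flat R R'
  localHom : IsLocalHom (algebraMap R R')
  Q : Type u
  [commRingQ : CommRing Q]
  [isLocalRingQ : IsLocalRing Q]
  π : Q →+* R'
  surjective : Function.Surjective π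
  localHomπ : IsLocalHom π
  seq : List Q
  isRegularSeq : RingTheory.Sequence.IsRegular Q seq
  ker_eq : RingHom.ker π = Ideal.span {x | x ∈ seq}

/-- A module has finite projective dimension if it admits a projective resolution
vanishing in all sufficiently high degrees. -/
def HasFiniteProjDim (A : Type u) [CommRing A] (X : Type u) [AddCommGroup X]
    [Module A X] : Prop :=
  ∃ (P : ProjectiveResolution (ModuleCat.of A X)) (n : ℕ),
    ∀ i : ℕ, n < i → Limits.IsZero (P.complex.X i)

/-- `M` has finite complete intersection dimension: there is a quasi-deformation
`R → R' ↞ Q` such that `M ⊗_R R'` has finite projective dimension over `Q`. -/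
def HasFiniteCIDim (R : Type u) [CommRing R] [IsLocalRing R] (M : Type u)
    [AddCommGroup M] [Module R M] : Prop :=
  ∃ D : QuasiDeformation R,
    letI := D.commRingR'
    letI := D.algebraR'
    letI := D.commRingQ
    letI : Module D.Q (TensorProduct R D.R' M) := Module.compHom _ D.π
    HasFiniteProjDim D.Q (TensorProduct R D.R' M)

/-- `R` is unramified or equi-characteristic: either `R` and its residue field have the
same characteristic, or the residue characteristic `p` satisfies `p ∉ 𝔪²`. -/
def IsUnramifiedOrEquiChar (R : Type u) [CommRing R] [IsLocalRing R] : Prop :=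
  ringChar R = ringChar (ResidueField R) ∨
    ∀ p : ℕ, p.Prime → p = ringChar (ResidueField R) → (p : R) ∉ maximalIdeal R ^ 2

end


/-!
Write `T = 𝓣(M)` and `A = M/T`, and let `P₁ → P₀ → N → 0` start a projective resolution,
with `K = ker(P₀ → N)`. Computing `Tor` through this resolution, `Tor_1(A, N) = 0` makes
`A ⊗ K → A ⊗ P₀` injective; since `P₀` is flat, a diagram chase in the tensor products of
`0 → T → M → A → 0` with `K → P₀ → N → 0` then makes `N ⊗ T → N ⊗ M` injective. But `N ⊗ T`
is torsion and `M ⊗ N` is torsion-free, so `N ⊗ T = 0`. Over the residue field `k`,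
`k ⊗ (N ⊗ T) ≅ (k ⊗ N) ⊗_k (k ⊗ T)`, so Nakayama's lemma gives `T = 0`, `T` being finitely
generated because `R` is Noetherian.
-/

open TensorProduct

theorem CategoryTheory.ProjectiveResolution.exact_lTensor_of_isZero_tor_one {R : Type u}
    [CommRing R] {N : ModuleCat.{u} R} (P : ProjectiveResolution N) (A : ModuleCat.{u} R)
    (h : Limits.IsZero (((Tor (ModuleCat.{u} R) 1).obj A).obj N)) :
    Function.Exact ((P.complex.d 2 1).hom.lTensor A) ((P.complex.d 1 0).hom.lTensor A) := by
  let K :=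
    (((MonoidalCategory.tensoringLeft (ModuleCat.{u} R)).obj A).mapHomologicalComplex _).obj
      P.complex
  have hK : K.ExactAt 1 := (HomologicalComplex.exactAt_iff_isZero_homology _ _).mpr
    (h.of_iso (P.isoLeftDerivedObj _ 1).symm)
  exact (ShortComplex.ShortExact.moduleCat_exact_iff_function_exact _).mp
    ((HomologicalComplex.exactAt_iff' K 2 1 0 (by simp) (by simp)).mp hK)

theorem LinearMap.lTensor_injective_of_exact_lTensor_comp {R : Type*} [CommRing R]
    {A P₂ P₁ K P₀ : Type*} [AddCommGroup A] [AddCommGroup P₂] [AddCommGroup P₁]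
    [AddCommGroup K] [AddCommGroup P₀] [Module R A] [Module R P₂] [Module R P₁] [Module R K]
    [Module R P₀] {d : P₂ →ₗ[R] P₁} {π : P₁ →ₗ[R] K} {ι : K →ₗ[R] P₀}
    (hπ : Function.Surjective π) (hπd : π ∘ₗ d = 0)
    (h : Function.Exact (d.lTensor A) ((ι ∘ₗ π).lTensor A)) :
    Function.Injective (ι.lTensor A) := by
  rw [injective_iff_map_eq_zero]
  intro x hx
  obtain ⟨y, rfl⟩ := lTensor_surjective A hπ x
  obtain ⟨z, rfl⟩ := (h y).mp (by rwa [lTensor_comp, comp_apply])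
  rw [← comp_apply, ← lTensor_comp, hπd, lTensor_zero, zero_apply]

theorem Module.IsTorsion.tensorProduct_right {R : Type*} [CommRing R] {T : Type*} (N : Type*)
    [AddCommGroup T] [Module R T] [AddCommGroup N] [Module R N] (hT : Module.IsTorsion R T) :
    Module.IsTorsion R (N ⊗[R] T) := by
  intro x
  induction x using TensorProduct.induction_on with
  | zero => exact ⟨1, smul_zero _⟩
  | tmul n t =>
    obtain ⟨r, hr⟩ := @hT t
    exact ⟨r, by rw [Submonoid.smul_def, smul_tmul', smul_tmul, ← Submonoid.smul_def, hr,
      tmul_zero]⟩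
  | add x y hx hy =>
    obtain ⟨r, hr⟩ := hx
    obtain ⟨s, hs⟩ := hy
    refine ⟨r * s, ?_⟩
    rw [smul_add, mul_comm, mul_smul, hr, mul_comm, mul_smul, hs, smul_zero, smul_zero,
      add_zero]

theorem Module.IsTorsion.subsingleton_of_injective {R : Type*} [CommRing R] {X Y : Type*}
    [AddCommGroup X] [Module R X] [AddCommGroup Y] [Module R Y] (hX : Module.IsTorsion R X)
    (hY : Submodule.torsion R Y = ⊥) {f : X →ₗ[R] Y} (hf : Function.Injective f) :
    Subsingleton X := by
  refine subsingleton_of_forall_eq 0 fun x => hf ?_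
  obtain ⟨r, hr⟩ := @hX x
  have : f x ∈ Submodule.torsion R Y :=
    ⟨r, by rw [Submonoid.smul_def, ← map_smul, ← Submonoid.smul_def, hr, map_zero]⟩
  rwa [hY, Submodule.mem_bot, ← map_zero f] at this

theorem IsLocalRing.nontrivial_tensorProduct {R : Type*} [CommRing R] [IsLocalRing R]
    (M N : Type*) [AddCommGroup M] [Module R M] [Module.Finite R M] [Nontrivial M]
    [AddCommGroup N] [Module R N] [Module.Finite R N] [Nontrivial N] :
    Nontrivial (M ⊗[R] N) := by
  have : Nontrivial (ResidueField R ⊗[R] M) := by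
    rw [← not_subsingleton_iff_nontrivial, subsingleton_tensorProduct]
    exact not_subsingleton M
  have : Nontrivial (ResidueField R ⊗[R] N) := by
    rw [← not_subsingleton_iff_nontrivial, subsingleton_tensorProduct]
    exact not_subsingleton N
  have : Nontrivial (ResidueField R ⊗[R] (M ⊗[R] N)) :=
    (AlgebraTensorModule.distribBaseChange R (ResidueField R) M N).toEquiv.nontrivial
  by_contra h
  rw [not_nontrivial_iff_subsingleton] at h
  exact not_subsingleton (ResidueField R ⊗[R] (M ⊗[R] N)) inferInstance

theorem Submodule.lTensor_subtype_injective_of_isZero_tor_one {R : Type u} [CommRing R]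
    {M : Type u} (N : Type u) [AddCommGroup M] [Module R M] [AddCommGroup N] [Module R N]
    (T : Submodule R M)
    (h : Limits.IsZero (((Tor (ModuleCat.{u} R) 1).obj (ModuleCat.of R (M ⧸ T))).obj
      (ModuleCat.of R N))) :
    Function.Injective (T.subtype.lTensor N) := by
  obtain ⟨P⟩ := HasProjectiveResolution.out (Z := ModuleCat.of R N)
  let d₂₁ := (P.complex.d 2 1).hom
  let d₁₀ := (P.complex.d 1 0).hom
  let ε := (P.π.f 0).hom
  have : Module.Projective R (P.complex.X 0) :=
    (IsProjective.iff_projective _).mpr (P.projective 0)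
  have hd : Function.Exact d₂₁ d₁₀ :=
    (ShortComplex.ShortExact.moduleCat_exact_iff_function_exact _).mp (P.exact_succ 0)
  have hε : Function.Exact d₁₀ ε :=
    (ShortComplex.ShortExact.moduleCat_exact_iff_function_exact
      (ShortComplex.mk _ _ P.complex_d_comp_π_f_zero)).mp
      (ShortComplex.exact_of_g_is_cokernel _ P.isColimitCokernelCofork)
  have hε_surj : Function.Surjective ε := (ModuleCat.epi_iff_surjective _).mp inferInstance
  have hι : Function.Exact (LinearMap.range d₁₀).subtype ε := by
    rw [LinearMap.exact_iff, Submodule.range_subtype, hε.linearMap_ker_eq]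
  have hK : Function.Injective ((LinearMap.range d₁₀).subtype.lTensor (M ⧸ T)) :=
    LinearMap.lTensor_injective_of_exact_lTensor_comp d₁₀.surjective_rangeRestrict
      (d := d₂₁) (LinearMap.ext fun x => Subtype.ext (hd.apply_apply_eq_zero x))
      (P.exact_lTensor_of_isZero_tor_one _ h)
  refine lTensor_injective_of_exact_of_exact_of_rTensor_injective hι hε_surj
    (LinearMap.exact_subtype_mkQ T) T.mkQ_surjective ?_
    (Module.Flat.lTensor_preserves_injective_linearMap _ T.injective_subtype)
  rw [← Function.Injective.of_comp_iff' _ (TensorProduct.comm R (M ⧸ T) _).bijective,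
    ← LinearEquiv.coe_toLinearMap, ← LinearMap.coe_comp, LinearMap.rTensor_comp_comm]
  exact (TensorProduct.comm R _ _).injective.comp hK

theorem torsion_free_of_tor_vanishing_general (R : Type u) [CommRing R] [IsLocalRing R]
    [IsNoetherianRing R]
    (M N : Type u) [AddCommGroup M] [Module R M] [Module.Finite R M]
    [AddCommGroup N] [Module R N] [Module.Finite R N]
    (hN : Nontrivial N)
    (htor : Limits.IsZero
      (((Tor (ModuleCat.{u} R) 1).obj
        (ModuleCat.of R (M ⧸ Submodule.torsion R M))).obj (ModuleCat.of R N)))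
    (htf : Submodule.torsion R (TensorProduct R M N) = ⊥) :
    Submodule.torsion R M = ⊥ := by
  have hinj := (Submodule.torsion R M).lTensor_subtype_injective_of_isZero_tor_one N htor
  have : Subsingleton (N ⊗[R] Submodule.torsion R M) :=
    (Submodule.torsion_isTorsion.tensorProduct_right N).subsingleton_of_injective htf
      (f := (TensorProduct.comm R N M).toLinearMap ∘ₗ (Submodule.torsion R M).subtype.lTensor N)
      ((TensorProduct.comm R N M).injective.comp hinj)
  have : Module.Finite R (Submodule.torsion R M) :=
    .of_injective _ (Submodule.injective_subtype _)
  rw [← Submodule.subsingleton_iff_eq_bot, ← not_nontrivial_iff_subsingleton]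
  intro
  exact not_nontrivial _ (IsLocalRing.nontrivial_tensorProduct (R := R) N (Submodule.torsion R M))

/-- If `Tor_1^R(M/𝓣(M), N) = 0` and `M ⊗_R N` is torsion-free, then `M` is
torsion-free. -/
theorem torsion_free_of_tor_vanishing (R : Type u) [CommRing R] [IsLocalRing R]
    [IsNoetherianRing R]
    (M N : Type u) [AddCommGroup M] [Module R M] [Module.Finite R M]
    [AddCommGroup N] [Module R N] [Module.Finite R N]
    (hM : Nontrivial M) (hN : Nontrivial N)
    (htor : Limits.IsZero
      (((Tor (ModuleCat.{u} R) 1).obj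
        (ModuleCat.of R (M ⧸ Submodule.torsion R M))).obj (ModuleCat.of R N)))
    (htf : Submodule.torsion R (TensorProduct R M N) = ⊥) :
    Submodule.torsion R M = ⊥ :=
  torsion_free_of_tor_vanishing_general R M N hN htor htf
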